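/- arXiv:1108.4227 — 4 statements merged into one kernel-verified Lean document; each statement's English description precedes it below -/
import Mathlib

section
/- Let q be a prime power and let Φ : P¹(F̄_q) → P²(F̄_q) be given by Φ(s : t) = (s^{q+1} : s^q t + s t^q : t^{q+1}). Then for two distinct points P, P' of P¹, Φ(P) = Φ(P') if and only if P ∈ P¹(F_{q²}) \ P¹(F_q) and P' = P^q, where P^q denotes coordinatewise q-th power. -/
/-- Let `Φ : P¹(F̄_q) → P²(F̄_q)`, `Φ(s:t) = (s^{q+1} : s^q t + s t^q : t^{q+1})`.
For two distinct points `P = (s:t)` and `P' = (s':t')` of `P¹`, we have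
`Φ(P) = Φ(P')` iff `P ∈ P¹(F_{q²}) \ P¹(F_q)` and `P' = P^q` (coordinatewise
`q`-th power). Points of `P¹` are given by nonzero coordinate pairs up to a
nonzero scalar. -/
theorem stmt_2 (p e : ℕ) [Fact (Nat.Prime p)] (he : 1 ≤ e) (q : ℕ) (hq : q = p ^ e)
    (s t s' t' : AlgebraicClosure (ZMod p))
    (h1 : ¬(s = 0 ∧ t = 0)) (h2 : ¬(s' = 0 ∧ t' = 0))
    (hne : ¬∃ c : AlgebraicClosure (ZMod p), c ≠ 0 ∧ s' = c * s ∧ t' = c * t) :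
    (∃ c : AlgebraicClosure (ZMod p), c ≠ 0 ∧
        s' ^ (q + 1) = c * s ^ (q + 1) ∧
        s' ^ q * t' + s' * t' ^ q = c * (s ^ q * t + s * t ^ q) ∧
        t' ^ (q + 1) = c * t ^ (q + 1)) ↔
      ((∃ c : AlgebraicClosure (ZMod p), c ≠ 0 ∧
          (c * s) ^ (q ^ 2) = c * s ∧ (c * t) ^ (q ^ 2) = c * t) ∧
        ¬(∃ c : AlgebraicClosure (ZMod p), c ≠ 0 ∧
          (c * s) ^ q = c * s ∧ (c * t) ^ q = c * t) ∧
        (∃ c : AlgebraicClosure (ZMod p), c ≠ 0 ∧ s' = c * s ^ q ∧ t' = c * t ^ q)) := by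
  have hq0 : q ≠ 0 := by
    subst hq
    exact pow_ne_zero e (Fact.out (p := p.Prime)).ne_zero
  constructor
  · rintro ⟨c, hc, e1, e2, e3⟩
    have ht : t ≠ 0 := by
      intro h
      subst h
      have htz : t' ^ (q + 1) = 0 := by
        rw [e3, zero_pow (Nat.succ_ne_zero q), mul_zero]
      have ht' : t' = 0 := pow_eq_zero_iff (Nat.succ_ne_zero q) |>.mp htz
      have hs : s ≠ 0 := fun h => h1 ⟨h, rfl⟩
      have hs' : s' ≠ 0 := fun h => h2 ⟨h, ht'⟩
      exact hne ⟨s' / s, div_ne_zero hs' hs, (div_mul_cancel₀ s' hs).symm, by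
        rw [ht', mul_zero]⟩
    have ht' : t' ≠ 0 := by
      intro h
      rw [h, zero_pow (Nat.succ_ne_zero q)] at e3
      exact ht (pow_eq_zero_iff (Nat.succ_ne_zero q) |>.mp
        (by rw [← mul_left_cancel₀ hc (e3.symm.trans (mul_zero c).symm)]))
    have key1 : (s' / t') ^ (q + 1) = (s / t) ^ (q + 1) := by
      rw [div_pow, div_pow, div_eq_div_iff (pow_ne_zero _ ht') (pow_ne_zero _ ht)]
      linear_combination t ^ (q + 1) * e1 - s ^ (q + 1) * e3
    have key2 : s' / t' + (s' / t') ^ q = s / t + (s / t) ^ q := by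
      rw [div_pow, div_pow, div_add_div _ _ ht' (pow_ne_zero _ ht'),
        div_add_div _ _ ht (pow_ne_zero _ ht),
        div_eq_div_iff (mul_ne_zero ht' (pow_ne_zero _ ht'))
          (mul_ne_zero ht (pow_ne_zero _ ht))]
      linear_combination (t * t ^ q) * e2 - (s ^ q * t + s * t ^ q) * e3
    have hne' : s' / t' ≠ s / t := by
      intro h
      apply hne
      refine ⟨t' / t, div_ne_zero ht' ht, ?_, (div_mul_cancel₀ t' ht).symm⟩
      rw [div_eq_div_iff ht' ht] at h
      field_simp
      linear_combination h
    have key : (s' / t' - s / t) * (s' / t' - (s / t) ^ q) = 0 := by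
      linear_combination (s' / t') * key2 - key1
    rcases mul_eq_zero.mp key with h | h
    · exact absurd (sub_eq_zero.mp h) hne'
    have hE : s' / t' = (s / t) ^ q := sub_eq_zero.mp h
    have hq2 : (s / t) ^ (q ^ 2) = s / t := by
      rw [hE] at key2
      have : ((s / t) ^ q) ^ q = s / t := by linear_combination key2
      rw [pow_two, pow_mul]
      exact this
    have haq : (s / t) ^ q ≠ s / t := fun h => hne' (hE.trans h)
    refine ⟨⟨t⁻¹, inv_ne_zero ht, ?_, ?_⟩, ?_, ?_⟩
    · rw [mul_comm, ← div_eq_mul_inv]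
      exact hq2
    · rw [inv_mul_cancel₀ ht, one_pow]
    · rintro ⟨c₂, hc₂, f1, f2⟩
      apply haq
      have h : s / t = c₂ * s / (c₂ * t) := (mul_div_mul_left s t hc₂).symm
      rw [h, div_pow, f1, f2]
    · refine ⟨t' / t ^ q, div_ne_zero ht' (pow_ne_zero _ ht), ?_,
        (div_mul_cancel₀ t' (pow_ne_zero _ ht)).symm⟩
      rw [div_pow, div_eq_div_iff ht' (pow_ne_zero _ ht)] at hE
      field_simp
      linear_combination hE
  · rintro ⟨⟨c₁, hc₁, f1, f2⟩, -, ⟨c₃, hc₃, g1, g2⟩⟩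
    have ht : t ≠ 0 := by
      intro h
      subst h
      have hs : s ≠ 0 := fun h => h1 ⟨h, rfl⟩
      have ht'0 : t' = 0 := by rw [g2, zero_pow hq0, mul_zero]
      have hs' : s' ≠ 0 := fun h => h2 ⟨h, ht'0⟩
      exact hne ⟨s' / s, div_ne_zero hs' hs, (div_mul_cancel₀ s' hs).symm, by
        rw [ht'0, mul_zero]⟩
    have ht' : t' ≠ 0 := by
      rw [g2]; exact mul_ne_zero hc₃ (pow_ne_zero _ ht)
    have hq2 : (s / t) ^ (q ^ 2) = s / t := by
      have h : s / t = c₁ * s / (c₁ * t) := (mul_div_mul_left s t hc₁).symm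
      rw [h, div_pow, f1, f2]
    have hst : s ^ (q ^ 2) * t = s * t ^ (q ^ 2) := by
      rw [div_pow, div_eq_div_iff (pow_ne_zero _ ht) ht] at hq2
      linear_combination hq2
    refine ⟨t' ^ (q + 1) / t ^ (q + 1),
      div_ne_zero (pow_ne_zero _ ht') (pow_ne_zero _ ht), ?_, ?_,
      (div_mul_cancel₀ _ (pow_ne_zero _ ht)).symm⟩
    · rw [g1, g2, div_mul_eq_mul_div, eq_div_iff (pow_ne_zero _ ht)]
      linear_combination (c₃ ^ (q + 1) * s ^ q * t ^ q) * hst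
    · rw [g1, g2, div_mul_eq_mul_div, eq_div_iff (pow_ne_zero _ ht)]
      linear_combination (c₃ ^ (q + 1) * t ^ (2 * q)) * hst
end

section
/- Let q be a prime power and B ⊂ P² the image of the map Φ(s : t) = (s^{q+1} : s^q t + s t^q : t^{q+1}) defined over F_q. Then the number of F_q-rational points of B equals q + 1 + q(q-1)/2. -/
/-!
`Φ(s : t)` is the coefficient vector of the binary form `(t X - s Y)(t^q X - s^q Y)`, whose roots
are `α = (s : t)` and its conjugate `α^q`. Hence over `K = 𝔽_{q²}` we have `Φ(α) = Φ(β)` iff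
`β ∈ {α, α^q}`, so the points of `B` are the Frobenius orbits on `ℙ¹(K)`: the `q + 1` fixed
points and `(q² + 1 - (q + 1)) / 2` orbits of size two.
-/

open Projectivization Finset
open scoped LinearAlgebra.Projectivization

theorem card_image_mul_two_of_fiber_eq_pair {α β : Type*} [Fintype α] [DecidableEq α]
    [DecidableEq β] (f : α → β) (σ : α → α) (hf : ∀ x y, f x = f y ↔ y = x ∨ y = σ x) :
    #(univ.image f) * 2 = Fintype.card α + #{x | σ x = x} := by
  have hσ : ∀ x, σ (σ x) = x := fun x => by
    rcases (hf (σ x) x).1 ((hf x (σ x)).2 (Or.inr rfl)).symm with h | h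
    · rw [← h, ← h]
    · exact h.symm
  have hfiber : ∀ x, #{y | f y = f x} + #{y | σ y = y ∧ f y = f x} = 2 := by
    intro x
    have e : ∀ y, f y = f x ↔ y = x ∨ y = σ x := fun y => eq_comm.trans (hf x y)
    simp_rw [e]
    by_cases hx : σ x = x
    · have hfix : ∀ y, σ y = y ∧ (y = x ∨ y = x) ↔ y = x := fun y =>
        ⟨fun h => h.2.elim id id, fun h => ⟨h ▸ hx, Or.inl h⟩⟩
      simp_rw [hx, hfix, or_self, filter_eq', if_pos (mem_univ _), card_singleton]
    · have hfix : ({y | σ y = y ∧ (y = x ∨ y = σ x)} : Finset α) = ∅ := by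
        ext y
        simp only [mem_filter, mem_univ, true_and, notMem_empty, iff_false]
        rintro ⟨hy, rfl | rfl⟩
        · exact hx hy
        · exact hx (hy.symm.trans (hσ x))
      rw [hfix, card_empty, filter_or, filter_eq', filter_eq', if_pos (mem_univ _),
        if_pos (mem_univ _), card_union_of_disjoint (disjoint_singleton.2 (Ne.symm hx)),
        card_singleton, card_singleton]
  rw [← card_univ, card_eq_sum_card_image f univ,
    card_eq_sum_card_fiberwise (f := f) (t := univ.image f) (s := {x | σ x = x})
      (fun x _ => mem_image_of_mem f (mem_univ x)),
    ← sum_add_distrib, ← smul_eq_mul, ← sum_const]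
  refine sum_congr rfl fun b hb => ?_
  obtain ⟨x, -, rfl⟩ := mem_image.1 hb
  rw [← hfiber x, filter_filter]

theorem FiniteField.card_nthRootsFinset_of_dvd {K : Type*} [Field K] [Fintype K] {d : ℕ}
    (hd : d ∣ Fintype.card K - 1) : #(Polynomial.nthRootsFinset d (1 : K)) = d := by
  classical
  obtain ⟨g, hg⟩ := IsCyclic.exists_ofOrder_eq_natCard (α := Kˣ)
  rw [Nat.card_eq_fintype_card, Fintype.card_units] at hg
  have hg0 : orderOf g ≠ 0 := by
    have := Fintype.one_lt_card (α := K)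
    omega
  have hζ := orderOf_pow_orderOf_div hg0 (hg ▸ hd)
  exact (IsPrimitiveRoot.coe_units_iff.2 (hζ ▸ IsPrimitiveRoot.orderOf _)).card_nthRootsFinset

theorem FiniteField.card_pow_succ_eq_self {K : Type*} [Field K] [Fintype K] [DecidableEq K]
    {d : ℕ} (hd : d ∣ Fintype.card K - 1) : #{a : K | a ^ (d + 1) = a} = d + 1 := by
  have hd0 : 0 < d := Nat.pos_of_ne_zero <| by
    rintro rfl
    have := Fintype.one_lt_card (α := K)
    omega
  have hroots : ({a : K | a ^ (d + 1) = a} : Finset K) =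
      insert 0 (Polynomial.nthRootsFinset d 1) := by
    ext a
    rw [mem_filter, mem_insert, Polynomial.mem_nthRootsFinset hd0, pow_succ]
    by_cases ha : a = 0
    · simp [ha, hd0.ne']
    · simp [ha, mul_eq_right₀ ha]
  rw [hroots, card_insert_of_notMem (by simp [Polynomial.mem_nthRootsFinset hd0, hd0.ne']),
    FiniteField.card_nthRootsFinset_of_dvd hd]

theorem Finset.card_filter_option_map_eq_self {α : Type*} [Fintype α] [DecidableEq α]
    (g : α → α) : #{o : Option α | o.map g = o} = #{a | g a = a} + 1 := by
  have : ({o : Option α | o.map g = o} : Finset (Option α)) = insertNone {a | g a = a} := by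
    ext (_ | a) <;> simp
  rw [this, card_insertNone]

section BallicoHefez

variable {K : Type*} [Field K] {q : ℕ}

theorem Projectivization.mk_eq_mk_iff_of_apply_eq {ι : Type*} {v w : ι → K} {i : ι}
    (hv : v ≠ 0) (hw : w ≠ 0) (hwi : w i ≠ 0) (hvw : v i = w i) :
    mk K v hv = mk K w hw ↔ v = w := by
  rw [mk_eq_mk_iff']
  refine ⟨fun ⟨a, ha⟩ => ?_, fun h => ⟨1, by rw [h, one_smul]⟩⟩
  have ha1 : a = 1 := by
    have := congrFun ha i
    rw [Pi.smul_apply, smul_eq_mul, hvw, mul_eq_right₀ hwi] at this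
    exact this
  rw [← ha, ha1, one_smul]

variable (q) in
def ballicoHefez (s t : K) : Fin 3 → K :=
  ![s ^ (q + 1), s ^ q * t + s * t ^ q, t ^ (q + 1)]

theorem ballicoHefez_mul (c s t : K) :
    ballicoHefez q (c * s) (c * t) = c ^ (q + 1) • ballicoHefez q s t := by
  ext i
  fin_cases i <;> simp [ballicoHefez] <;> ring

theorem ballicoHefez_one_zero_ne_zero : ballicoHefez q (1 : K) 0 ≠ 0 :=
  fun h => by simpa [ballicoHefez] using congrFun h 0

theorem ballicoHefez_one_ne_zero (a : K) : ballicoHefez q a 1 ≠ 0 :=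
  fun h => by simpa [ballicoHefez] using congrFun h 2

theorem ballicoHefez_one_eq_iff (hfrob : ∀ a : K, (a ^ q) ^ q = a) (a b : K) :
    ballicoHefez q a 1 = ballicoHefez q b 1 ↔ b = a ∨ b = a ^ q := by
  constructor
  · intro h
    have h0 := congrFun h 0
    have h1 := congrFun h 1
    simp only [ballicoHefez, Matrix.cons_val_zero, Matrix.cons_val_one,
      one_pow, mul_one] at h0 h1
    -- `b` is a root of `X² - (a + a^q) X + a^(q+1) = (X - a) (X - a^q)`
    have : (b - a) * (b - a ^ q) = 0 := by linear_combination h0 - b * h1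
    rcases mul_eq_zero.1 this with h | h
    · exact Or.inl (sub_eq_zero.1 h)
    · exact Or.inr (sub_eq_zero.1 h)
  · rintro (rfl | rfl)
    · rfl
    · ext i
      fin_cases i <;> simp [ballicoHefez, pow_succ, hfrob] <;> ring

variable (q) in
/-- `Φ` on `ℙ¹(K) = K ∪ {∞}`: `some a` is the point `(a : 1)` and `none` is `(1 : 0)`. -/
noncomputable def ballicoHefezPoint : Option K → ℙ K (Fin 3 → K)
  | none => mk K (ballicoHefez q 1 0) ballicoHefez_one_zero_ne_zero
  | some a => mk K (ballicoHefez q a 1) (ballicoHefez_one_ne_zero a)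

theorem range_ballicoHefezPoint :
    Set.range (ballicoHefezPoint q) =
      {P : ℙ K (Fin 3 → K) | ∃ s t : K, ∃ h : ballicoHefez q s t ≠ 0, P = mk K _ h} := by
  ext P
  constructor
  · rintro ⟨_ | a, rfl⟩
    · exact ⟨1, 0, _, rfl⟩
    · exact ⟨a, 1, _, rfl⟩
  · rintro ⟨s, t, h, rfl⟩
    by_cases ht : t = 0
    · subst ht
      refine ⟨none, Eq.symm ((mk_eq_mk_iff' ..).2 ⟨s ^ (q + 1), ?_⟩)⟩
      rw [← ballicoHefez_mul, mul_one, mul_zero]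
    · refine ⟨some (s / t), Eq.symm ((mk_eq_mk_iff' ..).2 ⟨t ^ (q + 1), ?_⟩)⟩
      rw [← ballicoHefez_mul, mul_div_cancel₀ s ht, mul_one]

theorem ballicoHefezPoint_eq_iff (hfrob : ∀ a : K, (a ^ q) ^ q = a) (o o' : Option K) :
    ballicoHefezPoint q o = ballicoHefezPoint q o' ↔ o' = o ∨ o' = o.map (· ^ q) := by
  have hinf (a : K) : ballicoHefezPoint q none ≠ ballicoHefezPoint q (some a) := by
    rw [ballicoHefezPoint, ballicoHefezPoint, Ne, mk_eq_mk_iff']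
    rintro ⟨c, hc⟩
    have hc0 : c = 0 := by simpa [ballicoHefez] using congrFun hc 2
    simpa [ballicoHefez, hc0] using congrFun hc 0
  rcases o with _ | a <;> rcases o' with _ | b
  · simp
  · simpa using hinf b
  · simpa using (hinf a).symm
  · rw [ballicoHefezPoint, ballicoHefezPoint, mk_eq_mk_iff_of_apply_eq _ _
      (i := 2) (by simp [ballicoHefez]) (by simp [ballicoHefez]), ballicoHefez_one_eq_iff hfrob]
    simp

end BallicoHefez

theorem stmt_3_general (q : ℕ) (K : Type*) [Field K] [Fintype K]
    (hK : Fintype.card K = q ^ 2) :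
    Set.ncard {P : Projectivization K (Fin 3 → K) | ∃ s t : K,
      ∃ h : (![s ^ (q + 1), s ^ q * t + s * t ^ q, t ^ (q + 1)] : Fin 3 → K) ≠ 0,
      P = Projectivization.mk K ![s ^ (q + 1), s ^ q * t + s * t ^ q, t ^ (q + 1)] h}
      = q + 1 + q * (q - 1) / 2 := by
  classical
  have hq : 1 < q := (one_lt_pow_iff two_ne_zero).1 (hK ▸ Fintype.one_lt_card)
  have hfrob (a : K) : (a ^ q) ^ q = a := by rw [← pow_mul, ← sq, ← hK, FiniteField.pow_card]
  have hfix : #{a : K | a ^ q = a} = q := by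
    obtain ⟨d, rfl⟩ : ∃ d, q = d + 1 := ⟨q - 1, by omega⟩
    refine FiniteField.card_pow_succ_eq_self (hK ▸ ?_)
    simpa using Nat.sub_dvd_pow_sub_pow (d + 1) 1 2
  have hcount := card_image_mul_two_of_fiber_eq_pair _ _ (ballicoHefezPoint_eq_iff hfrob)
  rw [Fintype.card_option, hK, card_filter_option_map_eq_self, hfix] at hcount
  erw [← range_ballicoHefezPoint]
  rw [← Set.image_univ, ← coe_univ, ← coe_image, Set.ncard_coe_finset]
  have := Nat.mul_sub_one q q
  have := Nat.le_mul_self q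
  rw [sq] at hcount
  omega

/-- The Ballico-Hefez curve `B`, the image of `Φ(s:t) = (s^{q+1} : s^q t + s t^q : t^{q+1})`,
has exactly `q + 1 + q(q-1)/2` points rational over `F_q`; these are the images of the
points of `P¹(F_{q²})` (here `K` is the field with `q²` elements). -/
theorem stmt_3 (q : ℕ) (hq : IsPrimePow q) (K : Type*) [Field K] [Fintype K]
    (hK : Fintype.card K = q ^ 2) :
    Set.ncard {P : Projectivization K (Fin 3 → K) | ∃ s t : K,
      ∃ h : (![s ^ (q + 1), s ^ q * t + s * t ^ q, t ^ (q + 1)] : Fin 3 → K) ≠ 0,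
      P = Projectivization.mk K ![s ^ (q + 1), s ^ q * t + s * t ^ q, t ^ (q + 1)] h}
      = q + 1 + q * (q - 1) / 2 :=
  stmt_3_general q K hK
end

section
/- Let q be a prime power and n ≥ 1. Define N = 1 + Σ_{k | n} (1/k) · #{α ∈ F̄_q : [F_q(α):F_q] = k} restricted to α ∈ F_{q^n} (i.e., N = 1 + Σ_{k|n} (1/k) Σ_{d|k} μ(k/d) q^d). Then N = 1 + (1/n) q^n + Σ_{d | n, d ≠ n} (1/d) · (∏_{ℓ prime, ℓ | (n/d)} (1 − 1/ℓ)) · q^d. -/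
/-!
Write `a d = q^d`. Since `1/k = (1/(k/d)) · (1/d)`, the inner sum at `k` is the Dirichlet
convolution `(μ/id) * (a/id)` evaluated at `k`, and summing over `k ∣ n` convolves once more with `ζ`.
Regrouping as `(ζ * (μ/id)) * (a/id)` leaves `ζ * (μ/id)`, which at `m` equals
`φ(m)/m = ∏_{ℓ ∣ m} (1 - 1/ℓ)` by Möbius inversion of `∑_{d ∣ m} φ(d) = m`.
-/

open ArithmeticFunction Finset
open scoped ArithmeticFunction.Moebius ArithmeticFunction.zeta

theorem sum_divisors_moebius_div_eq_prod_one_sub_inv {m : ℕ} (hm : m ≠ 0) :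
    ∑ e ∈ m.divisors, (μ e : ℚ) / e = ∏ p ∈ m.primeFactors, (1 - (p : ℚ)⁻¹) := by
  have sum_eq_totient : ∑ e ∈ m.divisors, (μ e : ℚ) * (m / e : ℕ) = m.totient := by
    rw [← Nat.sum_divisorsAntidiagonal fun a b => (μ a : ℚ) * b]
    refine (sum_eq_iff_sum_mul_moebius_eq (f := fun d => (d.totient : ℚ))
      (g := fun d => (d : ℚ))).mp (fun n _ => ?_) m (Nat.pos_of_ne_zero hm)
    exact_mod_cast Nat.sum_totient n
  have hm' : (m : ℚ) ≠ 0 := Nat.cast_ne_zero.mpr hm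
  rw [← mul_right_inj' hm', ← Nat.totient_eq_mul_prod_factors, ← sum_eq_totient, mul_sum]
  refine sum_congr rfl fun e he => ?_
  rw [Nat.cast_div (Nat.dvd_of_mem_divisors he)
    (Nat.cast_ne_zero.mpr (Nat.pos_of_mem_divisors he).ne')]
  ring

theorem sum_divisors_inv_mul_sum_moebius (a : ℕ → ℚ) (n : ℕ) :
    ∑ k ∈ n.divisors, (1 / (k : ℚ)) * ∑ d ∈ k.divisors, (μ (k / d) : ℚ) * a d
      = ∑ d ∈ n.divisors, (1 / (d : ℚ)) *
          (∏ ℓ ∈ (n / d).primeFactors, (1 - 1 / (ℓ : ℚ))) * a d := by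
  let A : ArithmeticFunction ℚ := ⟨fun d => a d / d, by simp⟩
  let M : ArithmeticFunction ℚ := pdiv (μ : ArithmeticFunction ℚ) (ArithmeticFunction.id : _)
  have inner_eq_conv : ∀ k ∈ n.divisors,
      (1 / (k : ℚ)) * ∑ d ∈ k.divisors, (μ (k / d) : ℚ) * a d = (M * A) k := by
    intro k hk
    rw [mul_apply, Nat.sum_divisorsAntidiagonal' fun x y => M x * A y, mul_sum]
    refine sum_congr rfl fun d hd => ?_
    have hk : k ≠ 0 := (Nat.pos_of_mem_divisors hk).ne'
    obtain ⟨e, rfl⟩ := Nat.dvd_of_mem_divisors hd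
    have hd : d ≠ 0 := left_ne_zero_of_mul hk
    simp only [Nat.mul_div_cancel_left e (Nat.pos_of_ne_zero hd), M, A, pdiv_apply, intCoe_apply,
      natCoe_apply, id_apply, coe_mk, Nat.cast_mul]
    field_simp
  calc _ = (ζ * (M * A)) n := by rw [coe_zeta_mul_apply]; exact sum_congr rfl inner_eq_conv
    _ = ((ζ * M) * A) n := by rw [mul_assoc]
    _ = _ := by
      rw [mul_apply, Nat.sum_divisorsAntidiagonal' fun x y => (ζ * M) x * A y]
      refine sum_congr rfl fun d hd => ?_
      have hnd : n / d ≠ 0 := (Nat.div_pos (Nat.divisor_le hd) (Nat.pos_of_mem_divisors hd)).ne'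
      simp only [coe_zeta_mul_apply, M, A, pdiv_apply, intCoe_apply, natCoe_apply, id_apply,
        coe_mk, sum_divisors_moebius_div_eq_prod_one_sub_inv hnd, one_div]
      ring

theorem stmt_17_general (q n : ℕ) :
    (1 : ℚ) + ∑ k ∈ n.divisors, (1 / (k : ℚ)) *
        ∑ d ∈ k.divisors, (μ (k / d) : ℚ) * (q : ℚ) ^ d
      = 1 + (1 / (n : ℚ)) * (q : ℚ) ^ n +
        ∑ d ∈ n.divisors.erase n, (1 / (d : ℚ)) *
          (∏ ℓ ∈ (n / d).primeFactors, (1 - 1 / (ℓ : ℚ))) * (q : ℚ) ^ d := by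
  rcases Nat.eq_zero_or_pos n with rfl | hn
  · simp
  rw [sum_divisors_inv_mul_sum_moebius, ← add_sum_erase _ _ (Nat.mem_divisors_self n hn.ne'),
    Nat.div_self hn, Nat.primeFactors_one, prod_empty, mul_one, add_assoc]

/-- The point count of the generalized Ballico-Hefez curve:
`1 + Σ_{k|n} (1/k) Σ_{d|k} μ(k/d) q^d
  = 1 + (1/n) q^n + Σ_{d|n, d≠n} (1/d) (∏_{ℓ prime, ℓ | n/d} (1 - 1/ℓ)) q^d`. -/
theorem stmt_17 (q n : ℕ) (hq : IsPrimePow q) (hn : 1 ≤ n) :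
    (1 : ℚ) + ∑ k ∈ n.divisors, (1 / (k : ℚ)) *
        ∑ d ∈ k.divisors, (μ (k / d) : ℚ) * (q : ℚ) ^ d
      = 1 + (1 / (n : ℚ)) * (q : ℚ) ^ n +
        ∑ d ∈ n.divisors.erase n, (1 / (d : ℚ)) *
          (∏ ℓ ∈ (n / d).primeFactors, (1 - 1 / (ℓ : ℚ))) * (q : ℚ) ^ d :=
  stmt_17_general q n
end

section
/- Let q be a prime power and n ≥ 2. For each k with 0 ≤ k ≤ n let φ_k(s) = σ_k(s, s^q, …, s^{q^{n−1}}) ∈ F_q[s]. Then for every tuple (a_0, …, a_n) in F̄_q, if Σ_{k=0}^n a_k φ_k(s) = 0 as a polynomial in s, then a_0 = a_1 = ⋯ = a_n = 0; equivalently the φ_k are linearly independent over F̄_q. -/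
open Polynomial

/-- The polynomials `φ_k(s) = σ_k(s, s^q, …, s^{q^{n-1}})`, `0 ≤ k ≤ n`, are linearly
independent over `F̄_q`: if `Σ_{k=0}^n a_k φ_k = 0` then all `a_k = 0`. -/
theorem stmt_18 (p e n : ℕ) [Fact (Nat.Prime p)] (he : 1 ≤ e) (hn : 2 ≤ n)
    (q : ℕ) (hq : q = p ^ e) (a : Fin (n + 1) → AlgebraicClosure (ZMod p))
    (h : ∑ k : Fin (n + 1), C (a k) *
        ∑ A ∈ (Finset.range n).powersetCard (k : ℕ),
          ∏ i ∈ A, (X : Polynomial (AlgebraicClosure (ZMod p))) ^ q ^ i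
      = 0) :
    ∀ k, a k = 0 := by
  have hq2 : 2 ≤ q := by
    have hp := (Fact.out : Nat.Prime p).two_le
    calc 2 ≤ p := hp
    _ ≤ p ^ e := Nat.le_self_pow (by omega) p
    _ = q := hq.symm
  have hinj := Finset.geomSum_injective (n := q) hq2
  intro k
  -- rewrite products as single powers
  have h' : ∑ k : Fin (n + 1), C (a k) *
      ∑ A ∈ (Finset.range n).powersetCard (k : ℕ),
        (X : Polynomial (AlgebraicClosure (ZMod p))) ^ (∑ i ∈ A, q ^ i) = 0 := by
    simpa [Finset.prod_pow_eq_pow_sum] using h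
  -- take the coefficient at ∑ i ∈ range k, q ^ i
  have hc := congrArg (fun P => Polynomial.coeff P (∑ i ∈ Finset.range (k : ℕ), q ^ i)) h'
  simp only [finset_sum_coeff, coeff_C_mul, coeff_zero, Finset.mul_sum, coeff_X_pow] at hc
  rw [Finset.sum_eq_single k] at hc
  · rw [Finset.sum_eq_single (Finset.range (k : ℕ))] at hc
    · simpa using hc
    · intro A hA hne
      have : (∑ i ∈ A, q ^ i) ≠ ∑ i ∈ Finset.range (k : ℕ), q ^ i :=
        fun hE => hne (hinj hE)
      simp [Ne.symm this]
    · intro hnm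
      exfalso
      apply hnm
      rw [Finset.mem_powersetCard]
      exact ⟨by intro i hi; exact Finset.mem_range.mpr (lt_of_lt_of_le (Finset.mem_range.mp hi) (Nat.lt_succ_iff.mp k.isLt)), Finset.card_range _⟩
  · intro j _ hjk
    apply Finset.sum_eq_zero
    intro A hA
    have hAcard : A.card = (j : ℕ) := (Finset.mem_powersetCard.mp hA).2
    have : (∑ i ∈ A, q ^ i) ≠ ∑ i ∈ Finset.range (k : ℕ), q ^ i := by
      intro hE
      have := hinj hE
      apply hjk
      apply Fin.ext
      rw [← hAcard, this, Finset.card_range]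
    simp [Ne.symm this]
  · simp
end
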